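/- arXiv:2006.15338 — 7 statements merged into one kernel-verified Lean document; each statement's English description precedes it below -/
import Mathlib

section
/- Let L be a meet-semilattice with least element 0. If F is an ultrafilter in L, e ∈ F, and {e_1, …, e_m} is a tight cover of e, then e_i ∈ F for some i. (This is the meet-semilattice case of the statement 'in an inverse semigroup every ultrafilter is a tight filter', to which the general case is reduced.) -/
/-- A filter in a meet-semilattice with bottom: a nonempty, upward-closed subset
closed under binary meets. -/
def IsLatFilter {L : Type*} [SemilatticeInf L] [OrderBot L] (F : Set L) : Prop :=
  F.Nonempty ∧ (∀ a ∈ F, ∀ b : L, a ≤ b → b ∈ F) ∧ (∀ a ∈ F, ∀ b ∈ F, a ⊓ b ∈ F)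

/-- An ultrafilter: a proper filter maximal under inclusion among proper filters. -/
def IsLatUltrafilter {L : Type*} [SemilatticeInf L] [OrderBot L] (F : Set L) : Prop :=
  IsLatFilter F ∧ (⊥ : L) ∉ F ∧
    ∀ G : Set L, IsLatFilter G → (⊥ : L) ∉ G → F ⊆ G → G = F

/-! If no `e_i` lay in the ultrafilter `F`, maximality would give for each `i` some `f_i ∈ F`
disjoint from `e_i`. The meet `y = e ⊓ f_1 ⊓ ⋯ ⊓ f_m` lies in `F`, so `0 < y ≤ e`, yet `y` is
disjoint from every `e_i`, contradicting tightness. -/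

section

variable {L : Type*} [SemilatticeInf L] [OrderBot L] {F : Set L}

/-- The filter generated by `F ∪ {a}`. -/
theorem IsLatFilter.isLatFilter_setOf_inf_le (hF : IsLatFilter F) (a : L) :
    IsLatFilter {b | ∃ f ∈ F, f ⊓ a ≤ b} := by
  obtain ⟨⟨f₀, hf₀⟩, -, hinf⟩ := hF
  refine ⟨⟨a, f₀, hf₀, inf_le_right⟩, ?_, ?_⟩
  · rintro b ⟨f, hf, hfb⟩ c hbc
    exact ⟨f, hf, hfb.trans hbc⟩
  · rintro b ⟨f, hf, hfb⟩ c ⟨g, hg, hgc⟩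
    exact ⟨f ⊓ g, hinf f hf g hg, le_inf ((inf_le_inf_right a inf_le_left).trans hfb)
      ((inf_le_inf_right a inf_le_right).trans hgc)⟩

theorem IsLatFilter.exists_le_forall_disjoint {s : Finset L} (hF : IsLatFilter F)
    (hs : ∀ a ∈ s, ∃ f ∈ F, Disjoint f a) {x : L} (hx : x ∈ F) :
    ∃ y ∈ F, y ≤ x ∧ ∀ a ∈ s, Disjoint y a := by
  classical
  induction s using Finset.induction_on with
  | empty => exact ⟨x, hx, le_rfl, by simp⟩
  | insert b s _ ih =>
    obtain ⟨y, hyF, hyx, hy⟩ := ih fun a ha => hs a (Finset.mem_insert_of_mem ha)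
    obtain ⟨f, hfF, hfb⟩ := hs b (Finset.mem_insert_self b s)
    refine ⟨y ⊓ f, hF.2.2 y hyF f hfF, inf_le_left.trans hyx, ?_⟩
    rintro a ha
    rcases Finset.mem_insert.mp ha with rfl | ha
    · exact hfb.mono_left inf_le_right
    · exact (hy a ha).mono_left inf_le_left

theorem IsLatUltrafilter.bot_lt_of_mem (hF : IsLatUltrafilter F) {x : L} (hx : x ∈ F) :
    ⊥ < x :=
  bot_lt_iff_ne_bot.mpr fun h => hF.2.1 (h ▸ hx)

theorem IsLatUltrafilter.exists_disjoint_of_notMem (hF : IsLatUltrafilter F) {a : L}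
    (ha : a ∉ F) : ∃ f ∈ F, Disjoint f a := by
  obtain ⟨hFil, -, hmax⟩ := hF
  by_contra! hmeet
  have hbot : (⊥ : L) ∉ {b | ∃ f ∈ F, f ⊓ a ≤ b} := by
    rintro ⟨f, hf, hfa⟩
    exact hmeet f hf (disjoint_iff.mpr (le_bot_iff.mp hfa))
  have hsub : F ⊆ {b | ∃ f ∈ F, f ⊓ a ≤ b} := fun f hf => ⟨f, hf, inf_le_left⟩
  obtain ⟨f₀, hf₀⟩ := hFil.1
  refine ha ?_
  rw [← hmax _ (hFil.isLatFilter_setOf_inf_le a) hbot hsub]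
  exact ⟨f₀, hf₀, inf_le_right⟩

end

theorem stmt_3_general {L : Type*} [SemilatticeInf L] [OrderBot L]
    (F : Set L) (hF : IsLatUltrafilter F) (e : L) (he : e ∈ F)
    (E : Finset L)
    (htight : ∀ x : L, ⊥ < x → x ≤ e → ∃ a ∈ E, x ⊓ a ≠ ⊥) :
    ∃ a ∈ E, a ∈ F := by
  by_contra! hnone
  obtain ⟨y, hyF, hye, hy⟩ :=
    hF.1.exists_le_forall_disjoint (fun a ha => hF.exists_disjoint_of_notMem (hnone a ha)) he
  obtain ⟨a, ha, hya⟩ := htight y (hF.bot_lt_of_mem hyF) hye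
  exact hya (disjoint_iff.mp (hy a ha))

/-- In a meet-semilattice with least element `⊥` (written `0`), if `F` is an
ultrafilter, `e ∈ F`, and `{e_1, …, e_m}` is a tight cover of `e`, then some
`e_i` belongs to `F`. -/
theorem stmt_3 {L : Type*} [SemilatticeInf L] [OrderBot L]
    (F : Set L) (hF : IsLatUltrafilter F) (e : L) (he : e ∈ F)
    (E : Finset L) (hle : ∀ a ∈ E, a ≤ e)
    (htight : ∀ x : L, ⊥ < x → x ≤ e → ∃ a ∈ E, x ⊓ a ≠ ⊥) :
    ∃ a ∈ E, a ∈ F :=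
  stmt_3_general F hF e he E htight
end

section
/- Let X be a nonempty finite subset of A*. Then the right ideal X·A* is essential (i.e. X·A* ∩ z·A* ≠ ∅ for every z ∈ A*) if and only if there exists a finite maximal prefix code Z with Z·A* = X·A*. In other words, every essential finitely generated right ideal of A* is generated by a finite maximal prefix code, and conversely. -/
/-!
Replacing `X` by its prefix-minimal elements yields a prefix code generating the same right
ideal. For any `X`, the ideal `X·A*` meets every `z·A*` exactly when every `z` is
prefix-comparable with some element of `X`, since two prefixes of a common word are comparable.
So essentiality of `X·A*` is the maximality of that prefix code.
-/

/-- A (finite) prefix code over the alphabet `Fin n`. -/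
def PrefixCode {n : ℕ} (X : Set (List (Fin n))) : Prop :=
  X.Finite ∧ ∀ x ∈ X, ∀ y ∈ X, x <+: y → x = y

/-- A maximal prefix code: a prefix code such that every string is
prefix-comparable with some element of it. -/
def MaximalPrefixCode {n : ℕ} (X : Set (List (Fin n))) : Prop :=
  PrefixCode X ∧ ∀ z : List (Fin n), ∃ x ∈ X, x <+: z ∨ z <+: x

namespace List

variable {α : Type*}

def rightIdeal (X : Set (List α)) : Set (List α) :=
  {w | ∃ x ∈ X, x <+: w}

def IsEssential (R : Set (List α)) : Prop :=
  ∀ z : List α, ∃ w, z <+: w ∧ w ∈ R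

def prefixMinimals (X : Set (List α)) : Set (List α) :=
  {x ∈ X | ∀ y ∈ X, y <+: x → y = x}

theorem isEssential_rightIdeal_iff {X : Set (List α)} :
    IsEssential (rightIdeal X) ↔ ∀ z : List α, ∃ x ∈ X, x <+: z ∨ z <+: x := by
  constructor
  · intro hX z
    obtain ⟨w, hzw, x, hx, hxw⟩ := hX z
    exact ⟨x, hx, prefix_or_prefix_of_prefix hxw hzw⟩
  · intro hX z
    obtain ⟨x, hx, hxz | hzx⟩ := hX z
    · exact ⟨z, prefix_refl z, x, hx, hxz⟩
    · exact ⟨x, hzx, x, hx, prefix_refl x⟩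

theorem exists_mem_prefixMinimals_prefix {X : Set (List α)} (hX : X.Finite) {x : List α}
    (hx : x ∈ X) : ∃ y ∈ prefixMinimals X, y <+: x := by
  obtain ⟨y, ⟨hyX, hyx⟩, hy_min⟩ := Set.exists_min_image {y ∈ X | y <+: x} length
    (hX.subset fun _ h => h.1) ⟨x, hx, prefix_refl x⟩
  refine ⟨y, ⟨hyX, fun y' hy'X hy'y => ?_⟩, hyx⟩
  exact hy'y.eq_of_length
    (le_antisymm hy'y.length_le (hy_min y' ⟨hy'X, hy'y.trans hyx⟩))

theorem rightIdeal_prefixMinimals {X : Set (List α)} (hX : X.Finite) :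
    rightIdeal (prefixMinimals X) = rightIdeal X := by
  ext w
  constructor
  · rintro ⟨y, hy, hyw⟩
    exact ⟨y, hy.1, hyw⟩
  · rintro ⟨x, hx, hxw⟩
    obtain ⟨y, hy, hyx⟩ := exists_mem_prefixMinimals_prefix hX hx
    exact ⟨y, hy, hyx.trans hxw⟩

end List

theorem prefixCode_prefixMinimals {n : ℕ} {X : Set (List (Fin n))} (hX : X.Finite) :
    PrefixCode (List.prefixMinimals X) :=
  ⟨hX.subset fun _ h => h.1, fun x hx _ hy hxy => hy.2 x hx.1 hxy⟩

theorem stmt_4_general (n : ℕ) (X : Set (List (Fin n)))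
    (hfin : X.Finite) :
    (∀ z : List (Fin n), ∃ w : List (Fin n), z <+: w ∧ ∃ x ∈ X, x <+: w) ↔
    (∃ Z : Set (List (Fin n)), MaximalPrefixCode Z ∧
      {w | ∃ x ∈ Z, x <+: w} = {w | ∃ x ∈ X, x <+: w}) := by
  constructor
  · intro hess
    refine ⟨List.prefixMinimals X, ⟨prefixCode_prefixMinimals hfin, ?_⟩,
      List.rightIdeal_prefixMinimals hfin⟩
    rw [← List.isEssential_rightIdeal_iff, List.rightIdeal_prefixMinimals hfin]
    exact hess
  · rintro ⟨Z, ⟨-, hZ_max⟩, hZX⟩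
    rw [← List.isEssential_rightIdeal_iff] at hZ_max
    change List.IsEssential (List.rightIdeal X)
    rwa [← show List.rightIdeal Z = List.rightIdeal X from hZX]

/-- For a nonempty finite `X ⊆ A*`, the right ideal `X·A*` is essential
(it meets every principal right ideal `z·A*`) if and only if `X·A*` is
generated by a finite maximal prefix code. -/
theorem stmt_4 (n : ℕ) (hn : 2 ≤ n) (X : Set (List (Fin n)))
    (hfin : X.Finite) (hne : X.Nonempty) :
    (∀ z : List (Fin n), ∃ w : List (Fin n), z <+: w ∧ ∃ x ∈ X, x <+: w) ↔
    (∃ Z : Set (List (Fin n)), MaximalPrefixCode Z ∧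
      {w | ∃ x ∈ Z, x <+: w} = {w | ∃ x ∈ X, x <+: w}) :=
  stmt_4_general n X hfin
end

section
/- Every finite maximal prefix code over A is either the trivial maximal prefix code {ε} or is obtained from {ε} by a finite sequence of caret expansions: for every finite maximal prefix code X, the pair ({ε}, X) lies in the reflexive–transitive closure of the relation Expand. -/
/-- `Expand X X'` holds if `X'` is the caret expansion of `X` at some `x ∈ X`. -/
def Expand (n : ℕ) (X X' : Set (List (Fin n))) : Prop :=
  ∃ x ∈ X, X' = (X \ {x}) ∪ {l : List (Fin n) | ∃ a : Fin n, l = x ++ [a]}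

/-!
Induction on the total length `∑ x ∈ X, |x|`. If `X ≠ {ε}`, pick a word `y a ∈ X` of maximal
length. Maximality of `X` forces every sibling `y b` into `X`, so `X` is the caret expansion at `y`
of `(X ∖ {y b | b ∈ A}) ∪ {y}`; this set is again a maximal prefix code, of smaller total length.
-/

section Words

variable {α : Type*}

def children (y : List α) : Set (List α) := {l | ∃ a : α, l = y ++ [a]}

def contract (X : Set (List α)) (y : List α) : Set (List α) := insert y (X \ children y)

noncomputable def totalLength (X : Set (List α)) : ℕ := ∑ᶠ x ∈ X, x.length

theorem totalLength_contract_lt {X : Set (List α)} {y : List α} (a : α) (hfin : X.Finite)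
    (hy : y ∉ X) (hc : children y ⊆ X) :
    totalLength (contract X y) < totalLength X := by
  have hcfin : (children y).Finite := hfin.subset hc
  have hsplit : totalLength (children y) + totalLength (X \ children y) = totalLength X :=
    finsum_mem_add_sdiff hc hfin
  have hinsert : totalLength (contract X y) = y.length + totalLength (X \ children y) :=
    finsum_mem_insert _ (fun h => hy h.1) hfin.sdiff
  have hchild : y.length + 1 ≤ totalLength (children y) := by
    have hsub : {y ++ [a]} ⊆ children y := Set.singleton_subset_iff.2 ⟨a, rfl⟩
    calc y.length + 1 = totalLength {y ++ [a]} := by simp [totalLength]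
      _ ≤ totalLength {y ++ [a]} + totalLength (children y \ {y ++ [a]}) := Nat.le_add_right _ _
      _ = totalLength (children y) := finsum_mem_add_sdiff hsub hcfin
  omega

end Words

section Codes

variable {n : ℕ} {X : Set (List (Fin n))} {y : List (Fin n)} {a : Fin n}

theorem expand_contract (hy : y ∉ X) (hc : children y ⊆ X) : Expand n (contract X y) X := by
  refine ⟨y, Set.mem_insert _ _, ?_⟩
  rw [contract, Set.insert_sdiff_self_of_notMem (fun h => hy h.1)]
  exact (Set.sdiff_union_of_subset hc).symm

namespace PrefixCode

theorem notMem_of_concat_mem (hX : PrefixCode X) (ha : y ++ [a] ∈ X) : y ∉ X := fun hy => by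
  simpa using hX.2 y hy _ ha (List.prefix_append y [a])

theorem contract (hX : PrefixCode X) (hc : children y ⊆ X) (ha : y ++ [a] ∈ X) :
    PrefixCode (contract X y) := by
  refine ⟨hX.1.sdiff.insert y, ?_⟩
  rintro u (rfl | ⟨hu, huc⟩) v (rfl | ⟨hv, hvc⟩) huv
  · rfl
  · obtain ⟨_ | ⟨b, w⟩, rfl⟩ := huv
    · exact absurd (by simpa using hv) (hX.notMem_of_concat_mem ha)
    · have hb : u ++ [b] <+: u ++ b :: w := ⟨w, by simp⟩
      exact absurd ⟨b, (hX.2 _ (hc ⟨b, rfl⟩) _ hv hb).symm⟩ hvc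
  · exact absurd ⟨a, hX.2 u hu _ ha (huv.trans (List.prefix_append v [a]))⟩ huc
  · exact hX.2 u hu v hv huv

end PrefixCode

namespace MaximalPrefixCode

theorem eq_singleton_nil_of_nil_mem (hX : MaximalPrefixCode X) (h : [] ∈ X) : X = {[]} :=
  Set.eq_singleton_iff_unique_mem.2 ⟨h, fun z hz => (hX.1.2 [] h z hz List.nil_prefix).symm⟩

theorem contract (hX : MaximalPrefixCode X) (hc : children y ⊆ X) (ha : y ++ [a] ∈ X) :
    MaximalPrefixCode (contract X y) := by
  refine ⟨hX.1.contract hc ha, fun z => ?_⟩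
  obtain ⟨w, hw, hwz⟩ := hX.2 z
  by_cases hwc : w ∈ children y
  · obtain ⟨b, rfl⟩ := hwc
    refine ⟨y, Set.mem_insert _ _, ?_⟩
    rcases hwz with hwz | hzw
    · exact Or.inl ((List.prefix_append y [b]).trans hwz)
    · rcases List.prefix_concat_iff.1 hzw with rfl | hzy
      · exact Or.inl (List.prefix_append y [b])
      · exact Or.inr hzy
  · exact ⟨w, Or.inr ⟨hw, hwc⟩, hwz⟩

theorem children_subset (hX : MaximalPrefixCode X) (ha : y ++ [a] ∈ X)
    (hmax : ∀ z ∈ X, z.length ≤ y.length + 1) : children y ⊆ X := by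
  rintro _ ⟨b, rfl⟩
  obtain ⟨w, hw, hwb | hbw⟩ := hX.2 (y ++ [b])
  · rcases List.prefix_concat_iff.1 hwb with rfl | hwy
    · exact hw
    · have hwa : w = y ++ [a] := hX.1.2 w hw _ ha (hwy.trans (List.prefix_append y [a]))
      have hlen := hwy.length_le
      simp [hwa] at hlen
  · have hlen : (y ++ [b]).length = w.length :=
      le_antisymm hbw.length_le (by simpa using hmax w hw)
    rwa [hbw.eq_of_length hlen]

theorem exists_children_subset (hX : MaximalPrefixCode X) (hne : X ≠ {[]}) :
    ∃ y a, y ++ [a] ∈ X ∧ children y ⊆ X := by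
  obtain ⟨w, hw, -⟩ := hX.2 []
  obtain ⟨x, hx, hmax⟩ := Set.exists_max_image X List.length hX.1.1 ⟨w, hw⟩
  rcases x.eq_nil_or_concat' with rfl | ⟨y, a, rfl⟩
  · exact absurd (hX.eq_singleton_nil_of_nil_mem hx) hne
  · exact ⟨y, a, hx, hX.children_subset hx (by simpa using hmax)⟩

end MaximalPrefixCode

end Codes

theorem stmt_8_general (n : ℕ) (X : Set (List (Fin n)))
    (hX : MaximalPrefixCode X) :
    Relation.ReflTransGen (Expand n) {([] : List (Fin n))} X := by
  induction hw : totalLength X using Nat.strong_induction_on generalizing X with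
  | _ w ih =>
    by_cases hne : X = {[]}
    · rw [hne]
    obtain ⟨y, a, ha, hc⟩ := hX.exists_children_subset hne
    have hy : y ∉ X := hX.1.notMem_of_concat_mem ha
    exact (ih _ (hw ▸ totalLength_contract_lt a hX.1.1 hy hc) _ (hX.contract hc ha) rfl).tail
      (expand_contract hy hc)

/-- Every finite maximal prefix code is obtained from the trivial maximal prefix
code `{ε}` by a finite sequence of caret expansions. -/
theorem stmt_8 (n : ℕ) (hn : 2 ≤ n) (X : Set (List (Fin n)))
    (hX : MaximalPrefixCode X) :
    Relation.ReflTransGen (Expand n) {([] : List (Fin n))} X :=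
  stmt_8_general n X hX
end

section
/- Let X and Y be nonempty finite prefix codes over A. Then the following are equivalent: (a) X·A* ⊆ Y·A*, and every string z ∈ Y·A* is prefix-comparable with some element of X; (b) X is obtained from Y by a finite sequence of caret expansions, i.e. (Y, X) lies in the reflexive–transitive closure of the relation Expand. (Condition (a) expresses that 1_X ≤_e 1_Y, where 1_X denotes the identity map on X·A*, in the inverse monoid D_n of bijective morphisms between finitely generated right ideals of A*.) -/
open Relation

section CaretExpansion

variable {α : Type*}

def rightIdeal (X : Set (List α)) : Set (List α) := {z | ∃ x ∈ X, x <+: z}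

def prefixClosure (X : Set (List α)) : Set (List α) := {p | ∃ x ∈ X, p <+: x}

def IsPrefixFree (X : Set (List α)) : Prop := ∀ x ∈ X, ∀ y ∈ X, x <+: y → x = y

def caretExpansion (X : Set (List α)) (x : List α) : Set (List α) :=
  (X \ {x}) ∪ {l | ∃ a, l = x ++ [a]}

def CaretExpands (X X' : Set (List α)) : Prop := ∃ x ∈ X, X' = caretExpansion X x

/-- The paper's `1_X ≤_e 1_Y`. -/
def EssentialSubideal (X Y : Set (List α)) : Prop :=
  rightIdeal X ⊆ rightIdeal Y ∧ ∀ z ∈ rightIdeal Y, ∃ x ∈ X, z <+: x ∨ x <+: z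

theorem Set.Finite.prefixClosure {X : Set (List α)} (hX : X.Finite) :
    (prefixClosure X).Finite := by
  refine hX.biUnion (fun x _ => ?_) |>.subset fun p ⟨x, hx, hpx⟩ => Set.mem_biUnion hx hpx
  exact x.inits.finite_toSet.subset fun p hp => List.mem_inits p x |>.mpr hp

theorem IsPrefixFree.eq_of_prefix_of_prefix {Y : Set (List α)} (hY : IsPrefixFree Y)
    {y₁ y₂ z : List α} (h₁ : y₁ ∈ Y) (h₂ : y₂ ∈ Y) (hz₁ : y₁ <+: z) (hz₂ : y₂ <+: z) :
    y₁ = y₂ :=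
  (List.prefix_or_prefix_of_prefix hz₁ hz₂).elim (hY y₁ h₁ y₂ h₂) fun h => (hY y₂ h₂ y₁ h₁ h).symm

theorem rightIdeal_caretExpansion {Y : Set (List α)} (hY : IsPrefixFree Y) {y : List α}
    (hy : y ∈ Y) : rightIdeal (caretExpansion Y y) = rightIdeal Y \ {y} := by
  ext z
  constructor
  · rintro ⟨w, ⟨hwY, hwy⟩ | ⟨a, rfl⟩, hwz⟩
    · exact ⟨⟨w, hwY, hwz⟩, fun hzy => hwy (hY w hwY y hy (hzy ▸ hwz))⟩
    · refine ⟨⟨y, hy, (List.prefix_append y [a]).trans hwz⟩, ?_⟩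
      rintro rfl
      simpa using hwz.length_le
  · rintro ⟨⟨w, hwY, u, rfl⟩, hzy⟩
    by_cases hwy : w = y
    · subst hwy
      obtain _ | ⟨a, t⟩ := u
      · exact absurd (List.append_nil w) hzy
      · exact ⟨w ++ [a], Or.inr ⟨a, rfl⟩, t, by simp⟩
    · exact ⟨w, Or.inl ⟨hwY, hwy⟩, u, rfl⟩

theorem IsPrefixFree.caretExpansion {Y : Set (List α)} (hY : IsPrefixFree Y) {y : List α}
    (hy : y ∈ Y) : IsPrefixFree (caretExpansion Y y) := by
  rintro u (⟨huY, huy⟩ | ⟨a, rfl⟩) v (⟨hvY, hvy⟩ | ⟨b, rfl⟩) huv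
  · exact hY u huY v hvY huv
  · exact absurd (hY.eq_of_prefix_of_prefix huY hy huv (List.prefix_append y [b])) huy
  · have := hY y hy v hvY ((List.prefix_append y [a]).trans huv)
    subst this
    simpa using huv.length_le
  · exact huv.eq_of_length (by simp)

theorem EssentialSubideal.refl (X : Set (List α)) : EssentialSubideal X X :=
  ⟨subset_rfl, fun _ ⟨x, hx, hxz⟩ => ⟨x, hx, Or.inr hxz⟩⟩

theorem EssentialSubideal.trans {X Y Z : Set (List α)} (hXY : EssentialSubideal X Y)
    (hYZ : EssentialSubideal Y Z) : EssentialSubideal X Z := by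
  refine ⟨hXY.1.trans hYZ.1, fun z hz => ?_⟩
  obtain ⟨y, hy, hzy | hyz⟩ := hYZ.2 z hz
  · obtain ⟨x, hx, hyx | hxy⟩ := hXY.2 y ⟨y, hy, List.prefix_refl y⟩
    · exact ⟨x, hx, Or.inl (hzy.trans hyx)⟩
    · exact ⟨x, hx, List.prefix_or_prefix_of_prefix hzy hxy⟩
  · exact hXY.2 z ⟨y, hy, hyz⟩

theorem essentialSubideal_caretExpansion [Nonempty α] {X : Set (List α)} {x : List α}
    (hx : x ∈ X) : EssentialSubideal (caretExpansion X x) X := by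
  refine ⟨?_, ?_⟩
  · rintro z ⟨w, ⟨hwX, -⟩ | ⟨a, rfl⟩, hwz⟩
    · exact ⟨w, hwX, hwz⟩
    · exact ⟨x, hx, (List.prefix_append x [a]).trans hwz⟩
  · rintro z ⟨w, hwX, u, rfl⟩
    by_cases hwx : w = x
    · subst hwx
      obtain _ | ⟨a, t⟩ := u
      · obtain ⟨a⟩ := ‹Nonempty α›
        exact ⟨w ++ [a], Or.inr ⟨a, rfl⟩, Or.inl (by simp)⟩
      · exact ⟨w ++ [a], Or.inr ⟨a, rfl⟩, Or.inr ⟨t, by simp⟩⟩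
    · exact ⟨w, Or.inl ⟨hwX, hwx⟩, Or.inr ⟨u, rfl⟩⟩

theorem essentialSubideal_of_reflTransGen [Nonempty α] {X Y : Set (List α)}
    (h : ReflTransGen CaretExpands Y X) : EssentialSubideal X Y := by
  induction h with
  | refl => exact EssentialSubideal.refl Y
  | tail _ hstep ih =>
    obtain ⟨x, hx, rfl⟩ := hstep
    exact (essentialSubideal_caretExpansion hx).trans ih

theorem EssentialSubideal.exists_prefix_mem [Nonempty α] {X Y : Set (List α)}
    (h : EssentialSubideal X Y) (hXfin : X.Finite) (hY : IsPrefixFree Y) {y : List α}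
    (hy : y ∈ Y) : ∃ x ∈ X, y <+: x := by
  obtain ⟨L, hL⟩ := hXfin.image List.length |>.bddAbove
  obtain ⟨a⟩ := ‹Nonempty α›
  set z := y ++ List.replicate (L + 1) a
  obtain ⟨x, hx, hzx | hxz⟩ := h.2 z ⟨y, hy, List.prefix_append _ _⟩
  · have hxL : x.length ≤ L := hL ⟨x, hx, rfl⟩
    have hzL := hzx.length_le
    simp only [z, List.length_append, List.length_replicate] at hzL
    omega
  obtain ⟨y', hy', hy'x⟩ := h.1 ⟨x, hx, List.prefix_refl x⟩
  obtain rfl := hY.eq_of_prefix_of_prefix hy' hy (hy'x.trans hxz) (List.prefix_append _ _)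
  exact ⟨x, hx, hy'x⟩

theorem EssentialSubideal.caretExpansion_right {X Y : Set (List α)} (h : EssentialSubideal X Y)
    (hX : IsPrefixFree X) (hY : IsPrefixFree Y) {y x : List α} (hy : y ∈ Y) (hyX : y ∉ X)
    (hx : x ∈ X) (hyx : y <+: x) : EssentialSubideal X (caretExpansion Y y) := by
  rw [EssentialSubideal, rightIdeal_caretExpansion hY hy]
  refine ⟨fun z hz => ⟨h.1 hz, ?_⟩, fun z hz => h.2 z hz.1⟩
  rintro rfl
  obtain ⟨x', hx', hx'y⟩ := hz
  obtain rfl := hX x' hx' x hx (hx'y.trans hyx)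
  exact hyX (hx'y.eq_of_length (le_antisymm hx'y.length_le hyx.length_le) ▸ hx')

theorem EssentialSubideal.exists_mem_not_mem {X Y : Set (List α)} (h : EssentialSubideal X Y)
    (hX : IsPrefixFree X) (hXY : X ≠ Y) : ∃ y ∈ Y, y ∉ X := by
  by_contra! hYX
  refine hXY (Set.Subset.antisymm (fun x hx => ?_) hYX)
  obtain ⟨y, hy, hyx⟩ := h.1 ⟨x, hx, List.prefix_refl x⟩
  exact hX y (hYX y hy) x hx hyx ▸ hy

theorem EssentialSubideal.reflTransGen_caretExpands [Nonempty α] {X Y : Set (List α)}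
    (h : EssentialSubideal X Y) (hXfin : X.Finite) (hX : IsPrefixFree X)
    (hY : IsPrefixFree Y) : ReflTransGen CaretExpands Y X := by
  induction hk : (rightIdeal Y ∩ prefixClosure X).ncard using Nat.strong_induction_on
    generalizing Y with
  | _ k ih =>
    by_cases hXY : X = Y
    · exact hXY ▸ ReflTransGen.refl
    obtain ⟨y, hy, hyX⟩ := h.exists_mem_not_mem hX hXY
    obtain ⟨x, hx, hyx⟩ := h.exists_prefix_mem hXfin hY hy
    have hdrop : rightIdeal (caretExpansion Y y) ∩ prefixClosure X
        = (rightIdeal Y ∩ prefixClosure X) \ {y} := by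
      rw [rightIdeal_caretExpansion hY hy, Set.inter_sdiff_right_comm]
    have hlt : (rightIdeal (caretExpansion Y y) ∩ prefixClosure X).ncard < k := by
      rw [hdrop, ← hk]
      exact Set.ncard_sdiff_singleton_lt_of_mem ⟨⟨y, hy, List.prefix_refl y⟩, x, hx, hyx⟩
        (hXfin.prefixClosure.inter_of_right _)
    exact ReflTransGen.head ⟨y, hy, rfl⟩
      (ih _ hlt (h.caretExpansion_right hX hY hy hyX hx hyx) (hY.caretExpansion hy) rfl)

end CaretExpansion

theorem stmt_11_general (n : ℕ) (hn : 2 ≤ n) (X Y : Set (List (Fin n)))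
    (hX : PrefixCode X) (hY : PrefixCode Y) :
    (({z | ∃ x ∈ X, x <+: z} ⊆ {z | ∃ y ∈ Y, y <+: z}) ∧
      ∀ z ∈ {z : List (Fin n) | ∃ y ∈ Y, y <+: z}, ∃ x ∈ X, z <+: x ∨ x <+: z) ↔
    Relation.ReflTransGen (Expand n) Y X := by
  have : Nonempty (Fin n) := ⟨⟨0, by omega⟩⟩
  exact ⟨fun h => EssentialSubideal.reflTransGen_caretExpands h hX.1 hX.2 hY.2,
    essentialSubideal_of_reflTransGen⟩

/-- For nonempty finite prefix codes `X`, `Y`: `1_X ≤_e 1_Y` (that is,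
`X·A* ⊆ Y·A*` and every `z ∈ Y·A*` is prefix-comparable with some element of
`X`) if and only if `X` is obtained from `Y` by a finite sequence of caret
expansions. -/
theorem stmt_11 (n : ℕ) (hn : 2 ≤ n) (X Y : Set (List (Fin n)))
    (hX : PrefixCode X) (hY : PrefixCode Y)
    (hXne : X.Nonempty) (hYne : Y.Nonempty) :
    (({z | ∃ x ∈ X, x <+: z} ⊆ {z | ∃ y ∈ Y, y <+: z}) ∧
      ∀ z ∈ {z : List (Fin n) | ∃ y ∈ Y, y <+: z}, ∃ x ∈ X, z <+: x ∨ x <+: z) ↔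
    Relation.ReflTransGen (Expand n) Y X :=
  stmt_11_general n hn X Y hX hY
end

section
/- Let S be an inverse semigroup with zero on which the Lenz relation ≡ is idempotent-pure. Then for all a, b ∈ S: a ≡ b if and only if there exists c ∈ S with c ≤_e a and c ≤_e b. -/
/-- An inverse semigroup with zero. -/
class InverseSemigroupWithZero (S : Type*) extends Semigroup S, Zero S where
  zero_mul : ∀ a : S, 0 * a = 0
  mul_zero : ∀ a : S, a * 0 = 0
  inv : S → S
  mul_inv_mul : ∀ a : S, a * inv a * a = a
  inv_mul_inv : ∀ a : S, inv a * a * inv a = inv a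
  inv_unique : ∀ a b : S, a * b * a = a → b * a * b = b → b = inv a

namespace InverseSemigroupWithZero

variable {S : Type*} [InverseSemigroupWithZero S]

/-- The natural partial order: `a ≤ b` iff `a = b * a⁻¹ * a`. -/
def nle (a b : S) : Prop := a = b * inv a * a

/-- `a ≤_e b`: `a` is essential in `b`. -/
def essIn (a b : S) : Prop :=
  nle a b ∧ ∀ x : S, x ≠ 0 → nle x b → a * inv x * x ≠ 0

/-- The Lenz relation `≡`. -/
def lenz (a b : S) : Prop :=
  (∀ x : S, x ≠ 0 → nle x a → ∃ z : S, z ≠ 0 ∧ nle z x ∧ nle z b) ∧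
  (∀ y : S, y ≠ 0 → nle y b → ∃ z : S, z ≠ 0 ∧ nle z y ∧ nle z a)

end InverseSemigroupWithZero

/-!
If `a ≡ b`, then `a b⁻¹ ≡ b b⁻¹` since `≡` is compatible with right multiplication, so idempotent
purity makes `a b⁻¹` idempotent. Then `c = a b⁻¹ b` lies below `b` as well as below `a`, so it is
the meet `a ∧ b`. A nonzero `x ≤ a` has, by `a ≡ b`, a nonzero lower bound `z` below `b`; then `z`
lies below both `c` and `x`, hence below `c ∧ x = c x⁻¹ x`, which is therefore nonzero. Conversely,
if `c ≤_e a` and `c ≤_e b`, then for nonzero `x ≤ a` the meet `c x⁻¹ x` is a nonzero element below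
both `x` and `b`.
-/

namespace InverseSemigroupWithZero

variable {S : Type*} [InverseSemigroupWithZero S] {a b c e f x z : S}

theorem inv_inv (a : S) : inv (inv a) = a :=
  (inv_unique (inv a) a (inv_mul_inv a) (mul_inv_mul a)).symm

theorem inv_eq_self_of_isIdempotentElem (he : IsIdempotentElem e) : inv e = e :=
  (inv_unique e e (by rw [he.eq, he.eq]) (by rw [he.eq, he.eq])).symm

theorem isIdempotentElem_inv_mul (a : S) : IsIdempotentElem (inv a * a) := by
  rw [IsIdempotentElem, ← mul_assoc, inv_mul_inv]

theorem isIdempotentElem_mul_inv (a : S) : IsIdempotentElem (a * inv a) := by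
  rw [IsIdempotentElem, ← mul_assoc, mul_inv_mul]

/-- `f (ef)⁻¹ e` is also an inverse of `ef`, which forces `(ef)⁻¹`, and hence `ef`, to be
idempotent. -/
theorem isIdempotentElem_mul (he : IsIdempotentElem e) (hf : IsIdempotentElem f) :
    IsIdempotentElem (e * f) := by
  set x := inv (e * f)
  have hx : f * x * e = x := by
    refine inv_unique _ _ ?_ ?_
    · calc e * f * (f * x * e) * (e * f) = e * f * x * (e * f) := by
            simp only [mul_assoc, he.mul_self_mul, hf.mul_self_mul]
        _ = e * f := mul_inv_mul _
    · calc f * x * e * (e * f) * (f * x * e) = f * (x * (e * f) * x) * e := by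
            simp only [mul_assoc, he.mul_self_mul, hf.mul_self_mul]
        _ = f * x * e := by rw [inv_mul_inv]
  have hxx : IsIdempotentElem x := by
    calc x * x = f * (x * (e * f) * x) * e := by
          conv_lhs => rw [← hx]
          simp only [mul_assoc]
      _ = x := by rw [inv_mul_inv, hx]
  rwa [← inv_inv (e * f), inv_eq_self_of_isIdempotentElem hxx]

theorem commute_of_isIdempotentElem (he : IsIdempotentElem e) (hf : IsIdempotentElem f) :
    Commute e f := by
  have hef := isIdempotentElem_mul he hf
  have hfe := isIdempotentElem_mul hf he
  have h := inv_unique (e * f) (f * e)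
    (by simpa only [mul_assoc, he.mul_self_mul, hf.mul_self_mul] using hef.eq)
    (by simpa only [mul_assoc, he.mul_self_mul, hf.mul_self_mul] using hfe.eq)
  exact (h.trans (inv_eq_self_of_isIdempotentElem hef)).symm

theorem mul_inv_rev (a b : S) : inv (a * b) = inv b * inv a := by
  have hcomm := commute_of_isIdempotentElem (isIdempotentElem_mul_inv b)
    (isIdempotentElem_inv_mul a)
  refine (inv_unique _ _ ?_ ?_).symm
  · calc a * b * (inv b * inv a) * (a * b) = a * (b * inv b * (inv a * a)) * b := by
          simp only [mul_assoc]
      _ = a * inv a * a * (b * inv b * b) := by rw [hcomm.eq]; simp only [mul_assoc]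
      _ = a * b := by rw [mul_inv_mul, mul_inv_mul]
  · calc inv b * inv a * (a * b) * (inv b * inv a)
          = inv b * (inv a * a * (b * inv b)) * inv a := by simp only [mul_assoc]
      _ = inv b * b * inv b * (inv a * a * inv a) := by rw [← hcomm.eq]; simp only [mul_assoc]
      _ = inv b * inv a := by rw [inv_mul_inv, inv_mul_inv]

theorem isIdempotentElem_conj (he : IsIdempotentElem e) (a : S) :
    IsIdempotentElem (inv a * e * a) := by
  have hcomm := commute_of_isIdempotentElem he (isIdempotentElem_mul_inv a)
  calc inv a * e * a * (inv a * e * a) = inv a * (e * (a * inv a)) * e * a := by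
        simp only [mul_assoc]
    _ = inv a * a * inv a * (e * e) * a := by rw [hcomm.eq]; simp only [mul_assoc]
    _ = inv a * e * a := by rw [inv_mul_inv, he.eq]

theorem idem_mul_eq_mul_conj (he : IsIdempotentElem e) (a : S) :
    e * a = a * (inv a * e * a) := by
  have hcomm := commute_of_isIdempotentElem he (isIdempotentElem_mul_inv a)
  calc e * a = e * (a * inv a) * a := by rw [mul_assoc, mul_inv_mul]
    _ = a * (inv a * e * a) := by rw [hcomm.eq]; simp only [mul_assoc]

theorem nle_iff_exists_mul_idem : nle a b ↔ ∃ e, IsIdempotentElem e ∧ a = b * e := by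
  refine ⟨fun h => ⟨inv a * a, isIdempotentElem_inv_mul a, h.trans (mul_assoc _ _ _)⟩, ?_⟩
  rintro ⟨e, he, rfl⟩
  have hcomm := commute_of_isIdempotentElem (isIdempotentElem_inv_mul b) he
  show b * e = b * inv (b * e) * (b * e)
  calc b * e = b * inv b * b * (e * e) := by rw [mul_inv_mul, he.eq]
    _ = b * (inv b * b * e) * e := by simp only [mul_assoc]
    _ = b * (e * (inv b * b)) * e := by rw [hcomm.eq]
    _ = b * inv (b * e) * (b * e) := by
        rw [mul_inv_rev, inv_eq_self_of_isIdempotentElem he]; simp only [mul_assoc]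

theorem mul_idem_nle (he : IsIdempotentElem e) (a : S) : nle (a * e) a :=
  nle_iff_exists_mul_idem.2 ⟨e, he, rfl⟩

theorem idem_mul_nle (he : IsIdempotentElem e) (a : S) : nle (e * a) a := by
  rw [idem_mul_eq_mul_conj he a]
  exact mul_idem_nle (isIdempotentElem_conj he a) a

theorem nle_trans (hab : nle a b) (hbc : nle b c) : nle a c := by
  obtain ⟨e, he, rfl⟩ := nle_iff_exists_mul_idem.1 hab
  obtain ⟨f, hf, rfl⟩ := nle_iff_exists_mul_idem.1 hbc
  exact mul_assoc c f e ▸ mul_idem_nle (isIdempotentElem_mul hf he) c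

theorem nle_mul_right (h : nle a b) (c : S) : nle (a * c) (b * c) := by
  obtain ⟨e, he, rfl⟩ := nle_iff_exists_mul_idem.1 h
  rw [mul_assoc, idem_mul_eq_mul_conj he c, ← mul_assoc]
  exact mul_idem_nle (isIdempotentElem_conj he c) _

theorem mul_inv_mul_eq_of_nle (hxa : nle x a) (ha : a * inv c * c = a) : x * inv c * c = x := by
  obtain ⟨e, he, rfl⟩ := nle_iff_exists_mul_idem.1 hxa
  have hcomm := commute_of_isIdempotentElem he (isIdempotentElem_inv_mul c)
  calc a * e * inv c * c = a * inv c * c * e := by simp only [mul_assoc, hcomm.eq]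
    _ = a * e := by rw [ha]

theorem left_ne_zero_of_mul (h : a * b ≠ 0) : a ≠ 0 :=
  fun ha => h (by rw [ha, zero_mul])

theorem ne_zero_of_nle (hz : z ≠ 0) (h : nle z a) : a ≠ 0 :=
  left_ne_zero_of_mul (left_ne_zero_of_mul (ne_of_eq_of_ne h.symm hz))

theorem mul_inv_mul_nle_left (a b : S) : nle (a * inv b * b) a :=
  mul_assoc a (inv b) b ▸ mul_idem_nle (isIdempotentElem_inv_mul b) a

theorem mul_inv_mul_comm_of_nle (ha : nle a c) (hb : nle b c) :
    a * inv b * b = b * inv a * a := by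
  have hcomm := commute_of_isIdempotentElem (isIdempotentElem_inv_mul a)
    (isIdempotentElem_inv_mul b)
  calc a * inv b * b = c * (inv a * a) * (inv b * b) := by
        conv_lhs => rw [ha]
        simp only [mul_assoc]
    _ = c * (inv b * b) * (inv a * a) := by rw [mul_assoc c, hcomm.eq, ← mul_assoc c]
    _ = b * inv a * a := by
        conv_rhs => rw [hb]
        simp only [mul_assoc]

theorem mul_inv_mul_nle_right (ha : nle a c) (hb : nle b c) : nle (a * inv b * b) b := by
  rw [mul_inv_mul_comm_of_nle ha hb]
  exact mul_inv_mul_nle_left b a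

theorem nle_mul_inv_mul (hza : nle z a) (hzb : nle z b) : nle z (a * inv b * b) := by
  have hz := mul_inv_mul_eq_of_nle hzb (mul_inv_mul b)
  obtain ⟨e, he, rfl⟩ := nle_iff_exists_mul_idem.1 hza
  have hcomm := commute_of_isIdempotentElem he (isIdempotentElem_inv_mul b)
  refine nle_iff_exists_mul_idem.2 ⟨e, he, ?_⟩
  calc a * e = a * e * inv b * b := hz.symm
    _ = a * inv b * b * e := by simp only [mul_assoc, hcomm.eq]

def lenzLE (a b : S) : Prop :=
  ∀ x : S, x ≠ 0 → nle x a → ∃ z : S, z ≠ 0 ∧ nle z x ∧ nle z b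

theorem lenz_iff : lenz a b ↔ lenzLE a b ∧ lenzLE b a := Iff.rfl

theorem lenzLE.mul_right (h : lenzLE a b) (c : S) : lenzLE (a * c) (b * c) := by
  intro x hx hxac
  have hxc : x * inv c * c = x :=
    mul_inv_mul_eq_of_nle hxac (by rw [mul_assoc a, mul_assoc a, mul_inv_mul])
  have hxa : nle (x * inv c) a := nle_trans (nle_mul_right hxac (inv c))
    (mul_assoc a c (inv c) ▸ mul_idem_nle (isIdempotentElem_mul_inv c) a)
  obtain ⟨z, hz, hzx, hzb⟩ := h _ (left_ne_zero_of_mul (hxc.symm ▸ hx)) hxa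
  have hzc : z * c * inv c = z := by
    simpa only [inv_inv] using mul_inv_mul_eq_of_nle hzx (c := inv c)
      (by rw [inv_inv, mul_assoc x, mul_assoc x, inv_mul_inv])
  exact ⟨z * c, left_ne_zero_of_mul (hzc.symm ▸ hz), hxc ▸ nle_mul_right hzx c,
    nle_mul_right hzb c⟩

theorem lenz.symm (h : lenz a b) : lenz b a := ⟨h.2, h.1⟩

theorem lenz.mul_right (h : lenz a b) (c : S) : lenz (a * c) (b * c) :=
  ⟨lenzLE.mul_right h.1 c, lenzLE.mul_right h.2 c⟩

theorem essIn_of_lenzLE (hab : lenzLE a b) (hca : nle c a)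
    (hc : ∀ z, nle z a → nle z b → nle z c) : essIn c a := by
  refine ⟨hca, fun x hx hxa => ?_⟩
  obtain ⟨z, hz, hzx, hzb⟩ := hab x hx hxa
  exact ne_zero_of_nle hz (nle_mul_inv_mul (hc z (nle_trans hzx hxa) hzb) hzx)

theorem lenzLE_of_essIn (hca : essIn c a) (hcb : nle c b) : lenzLE a b := fun x hx hxa =>
  ⟨c * inv x * x, hca.2 x hx hxa, mul_inv_mul_nle_right hca.1 hxa,
    nle_trans (mul_inv_mul_nle_left c x) hcb⟩

end InverseSemigroupWithZero

open InverseSemigroupWithZero in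
/-- If the Lenz relation `≡` is idempotent-pure on `S`, then `a ≡ b` iff
there exists `c` with `c ≤_e a` and `c ≤_e b`. -/
theorem stmt_14 {S : Type*} [InverseSemigroupWithZero S]
    (hip : ∀ e a : S, e * e = e → lenz e a → a * a = a) (a b : S) :
    lenz a b ↔ ∃ c : S, essIn c a ∧ essIn c b := by
  constructor
  · intro h
    have hidem : IsIdempotentElem (a * inv b) :=
      hip _ _ (isIdempotentElem_mul_inv b) (h.mul_right (inv b)).symm
    obtain ⟨hab, hba⟩ := lenz_iff.1 h
    exact ⟨a * inv b * b,
      essIn_of_lenzLE hab (mul_inv_mul_nle_left a b) fun _ hza hzb => nle_mul_inv_mul hza hzb,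
      essIn_of_lenzLE hba (idem_mul_nle hidem b) fun _ hzb hza => nle_mul_inv_mul hza hzb⟩
  · rintro ⟨c, hca, hcb⟩
    exact lenz_iff.2 ⟨lenzLE_of_essIn hca hcb.1, lenzLE_of_essIn hcb hca.1⟩
end

section
/- A subset of A* is a good subset if and only if it is a maximal filter. -/
/-- A good subset of `A*`: any two elements are prefix-comparable, and it
contains a string of every length. -/
def GoodSubset (n : ℕ) (C : Set (List (Fin n))) : Prop :=
  (∀ x ∈ C, ∀ y ∈ C, x <+: y ∨ y <+: x) ∧
  ∀ m : ℕ, ∃ x ∈ C, x.length = m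

/-- A filter in the free monoid `A*`. -/
def IsStringFilter (n : ℕ) (F : Set (List (Fin n))) : Prop :=
  F.Nonempty ∧
  (∀ x ∈ F, ∀ y ∈ F, ∃ u v : List (Fin n), x ++ u = y ++ v ∧ x ++ u ∈ F) ∧
  (∀ x ∈ F, ∀ y : List (Fin n), y <+: x → y ∈ F)

/-!
Two strings with a common extension are prefix-comparable, so every filter is a chain for the
prefix order. A good subset meets each length exactly once, hence any filter containing it
cannot contain anything else. Conversely, a maximal filter has no longest element: if `x` were
one, every element would be a prefix of `x`, and the prefixes of `x ++ [a]` would form a larger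
filter. Being closed under prefixes, it then contains a string of every length.
-/

theorem List.isPrefix_or_isPrefix_of_append_eq_append {α : Type*} {x y u v : List α}
    (h : x ++ u = y ++ v) : x <+: y ∨ y <+: x :=
  List.prefix_or_prefix_of_prefix (x.prefix_append u) (h ▸ y.prefix_append v)

theorem List.eq_of_isPrefix_or_isPrefix_of_length_eq {α : Type*} {x y : List α}
    (h : x <+: y ∨ y <+: x) (hl : x.length = y.length) : x = y :=
  h.elim (·.eq_of_length hl) fun h ↦ (h.eq_of_length hl.symm).symm

variable {n : ℕ} {C F G : Set (List (Fin n))} {x y : List (Fin n)}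

theorem isStringFilter_setOf_isPrefix (x : List (Fin n)) : IsStringFilter n {y | y <+: x} := by
  refine ⟨⟨[], List.nil_prefix⟩, ?_, fun z hz y hyz ↦ hyz.trans hz⟩
  rintro y ⟨u, rfl⟩ z ⟨v, hv⟩
  exact ⟨u, v, hv.symm, List.prefix_refl _⟩

namespace IsStringFilter

theorem isPrefix_or_isPrefix (hF : IsStringFilter n F) (hx : x ∈ F) (hy : y ∈ F) :
    x <+: y ∨ y <+: x := by
  obtain ⟨u, v, h, -⟩ := hF.2.1 x hx y hy
  exact List.isPrefix_or_isPrefix_of_append_eq_append h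

theorem eq_of_length_eq (hF : IsStringFilter n F) (hx : x ∈ F) (hy : y ∈ F)
    (hl : x.length = y.length) : x = y :=
  List.eq_of_isPrefix_or_isPrefix_of_length_eq (hF.isPrefix_or_isPrefix hx hy) hl

section Maximal

variable (hF : IsStringFilter n F) (hmax : ∀ G, IsStringFilter n G → F ⊆ G → G = F)
include hF hmax

theorem exists_length_gt (a : Fin n) (hx : x ∈ F) : ∃ y ∈ F, x.length < y.length := by
  by_contra! hlong
  have hsub : F ⊆ {y | y <+: x ++ [a]} := by
    intro y hy
    have hyx : y <+: x := (hF.isPrefix_or_isPrefix hy hx).elim id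
      fun hxy ↦ (hxy.eq_of_length_le (hlong y hy)) ▸ List.prefix_refl x
    exact hyx.trans (x.prefix_append [a])
  have hxa : x ++ [a] ∈ F := hmax _ (isStringFilter_setOf_isPrefix _) hsub ▸ List.prefix_refl _
  simpa using hlong _ hxa

theorem exists_length_ge (a : Fin n) (m : ℕ) : ∃ x ∈ F, m ≤ x.length := by
  induction m with
  | zero => exact hF.1.imp fun x hx ↦ ⟨hx, Nat.zero_le _⟩
  | succ m ih =>
    obtain ⟨x, hx, hmx⟩ := ih
    obtain ⟨y, hy, hxy⟩ := hF.exists_length_gt hmax a hx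
    exact ⟨y, hy, by omega⟩

theorem goodSubset (a : Fin n) : GoodSubset n F := by
  refine ⟨fun x hx y hy ↦ hF.isPrefix_or_isPrefix hx hy, fun m ↦ ?_⟩
  obtain ⟨x, hx, hmx⟩ := hF.exists_length_ge hmax a m
  exact ⟨x.take m, hF.2.2 x hx _ (x.take_prefix m), by simp [hmx]⟩

end Maximal

end IsStringFilter

namespace GoodSubset

theorem mem_of_isPrefix (hC : GoodSubset n C) (hx : x ∈ C) (hyx : y <+: x) : y ∈ C := by
  obtain ⟨z, hz, hzy⟩ := hC.2 y.length
  rcases hC.1 z hz x hx with hzx | hxz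
  · have : z <+: y := List.prefix_of_prefix_length_le hzx hyx hzy.le
    exact this.eq_of_length hzy ▸ hz
  · have : x.length ≤ y.length := hzy ▸ hxz.length_le
    exact (hyx.eq_of_length_le this).symm ▸ hx

theorem isStringFilter (hC : GoodSubset n C) : IsStringFilter n C := by
  refine ⟨(hC.2 0).imp fun x hx ↦ hx.1, fun x hx y hy ↦ ?_, fun x hx y ↦ hC.mem_of_isPrefix hx⟩
  rcases hC.1 x hx y hy with ⟨u, rfl⟩ | ⟨v, rfl⟩
  · exact ⟨u, [], by simp, hy⟩
  · exact ⟨[], v, by simp, by simpa using hx⟩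

theorem eq_of_subset (hC : GoodSubset n C) (hG : IsStringFilter n G) (hCG : C ⊆ G) : G = C := by
  refine Set.Subset.antisymm ?_ hCG
  intro g hg
  obtain ⟨x, hx, hxg⟩ := hC.2 g.length
  exact hG.eq_of_length_eq (hCG hx) hg hxg ▸ hx

end GoodSubset

/-- A subset of `A*` is a good subset if and only if it is a maximal filter. -/
theorem stmt_16 (n : ℕ) (hn : 2 ≤ n) (C : Set (List (Fin n))) :
    GoodSubset n C ↔
    (IsStringFilter n C ∧
      ∀ G : Set (List (Fin n)), IsStringFilter n G → C ⊆ G → G = C) := by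
  constructor
  · exact fun hC ↦ ⟨hC.isStringFilter, fun G hG hCG ↦ hC.eq_of_subset hG hCG⟩
  · rintro ⟨hC, hmax⟩
    exact hC.goodSubset hmax ⟨0, by omega⟩
end

section
/- A subset of A* is a good subset if and only if it is a tight filter. -/
/-- A tight cover of a string `a`: a finite set of strings extending `a` such
that every string extending `a` has a common right multiple with one of them. -/
def TightCoverStr (n : ℕ) (a : List (Fin n)) (E : Finset (List (Fin n))) : Prop :=
  (∀ b ∈ E, a <+: b) ∧
  ∀ z : List (Fin n), a <+: z → ∃ b ∈ E, ∃ r s : List (Fin n), z ++ r = b ++ s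

namespace List

variable {α : Type*}

theorem prefix_of_prefix_or_prefix_of_length_le {x z : List α} (h : x <+: z ∨ z <+: x)
    (hlen : x.length ≤ z.length) : x <+: z := by
  rcases h with h | h
  · exact h
  · rw [h.eq_of_length (le_antisymm h.length_le hlen)]

end List

section PrefixChain

variable {α : Type*} {C : Set (List α)}

theorem mem_of_prefix_of_forall_length (hcomp : ∀ x ∈ C, ∀ y ∈ C, x <+: y ∨ y <+: x)
    (hlen : ∀ m, ∃ x ∈ C, x.length = m) {x y : List α} (hx : x ∈ C) (hyx : y <+: x) :
    y ∈ C := by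
  obtain ⟨w, hw, hwy⟩ := hlen y.length
  have hwx : w <+: x :=
    List.prefix_of_prefix_or_prefix_of_length_le (hcomp w hw x hx) (hwy ▸ hyx.length_le)
  have hyw : y <+: w := List.prefix_of_prefix_length_le hyx hwx hwy.ge
  rwa [hyw.eq_of_length hwy.symm]

theorem prefix_or_prefix_of_common_extension
    (hcrm : ∀ x ∈ C, ∀ y ∈ C, ∃ u v : List α, x ++ u = y ++ v ∧ x ++ u ∈ C) :
    ∀ x ∈ C, ∀ y ∈ C, x <+: y ∨ y <+: x := by
  intro x hx y hy
  obtain ⟨u, v, huv, -⟩ := hcrm x hx y hy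
  exact List.prefix_or_prefix_of_prefix (List.prefix_append x u) ⟨v, huv.symm⟩

end PrefixChain

variable {n : ℕ} {C : Set (List (Fin n))}

theorem GoodSubset.mem_of_prefix (hC : GoodSubset n C) {x y : List (Fin n)} (hx : x ∈ C)
    (hyx : y <+: x) : y ∈ C :=
  mem_of_prefix_of_forall_length hC.1 hC.2 hx hyx

theorem GoodSubset.isStringFilter_s17 (hC : GoodSubset n C) : IsStringFilter n C := by
  refine ⟨⟨_, (hC.2 0).choose_spec.1⟩, ?_, fun x hx y => hC.mem_of_prefix hx⟩
  intro x hx y hy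
  rcases hC.1 x hx y hy with ⟨u, rfl⟩ | ⟨v, rfl⟩
  · exact ⟨u, [], by simp, hy⟩
  · exact ⟨[], v, by simp, by simpa using hx⟩

theorem GoodSubset.exists_mem_of_tightCoverStr (hC : GoodSubset n C) {a : List (Fin n)}
    (ha : a ∈ C) {E : Finset (List (Fin n))} (hE : TightCoverStr n a E) : ∃ b ∈ E, b ∈ C := by
  obtain ⟨x, hx, hxl⟩ := hC.2 (max a.length (E.sup List.length))
  have hax : a <+: x := List.prefix_of_prefix_or_prefix_of_length_le (hC.1 a ha x hx) (by omega)
  obtain ⟨b, hb, r, s, hrs⟩ := hE.2 x hax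
  have hbx : b <+: x :=
    List.prefix_of_prefix_length_le ⟨s, hrs.symm⟩ (List.prefix_append x r)
      (hxl ▸ (Finset.le_sup hb).trans (le_max_right _ _))
  exact ⟨b, hb, hC.mem_of_prefix hx hbx⟩

theorem tightCoverStr_image_append_singleton (hn : 0 < n) (a : List (Fin n)) :
    TightCoverStr n a (Finset.univ.image fun c => a ++ [c]) := by
  refine ⟨by simp, ?_⟩
  rintro z ⟨t, rfl⟩
  cases t with
  | nil => exact ⟨a ++ [⟨0, hn⟩], by simp, [⟨0, hn⟩], [], by simp⟩
  | cons c t => exact ⟨a ++ [c], by simp, [], t, by simp⟩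

theorem exists_mem_length_of_tight (hn : 0 < n) (hF : IsStringFilter n C)
    (htight : ∀ a ∈ C, ∀ E : Finset (List (Fin n)), TightCoverStr n a E → ∃ b ∈ E, b ∈ C)
    (m : ℕ) : ∃ x ∈ C, x.length = m := by
  induction m with
  | zero =>
    obtain ⟨x, hx⟩ := hF.1
    exact ⟨[], hF.2.2 x hx [] List.nil_prefix, rfl⟩
  | succ m ih =>
    obtain ⟨a, ha, rfl⟩ := ih
    obtain ⟨b, hb, hbC⟩ := htight a ha _ (tightCoverStr_image_append_singleton hn a)
    obtain ⟨c, -, rfl⟩ := Finset.mem_image.mp hb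
    exact ⟨a ++ [c], hbC, by simp⟩

/-- A subset of `A*` is a good subset if and only if it is a tight filter. -/
theorem stmt_17 (n : ℕ) (hn : 2 ≤ n) (C : Set (List (Fin n))) :
    GoodSubset n C ↔
    (IsStringFilter n C ∧
      ∀ a ∈ C, ∀ E : Finset (List (Fin n)), TightCoverStr n a E →
        ∃ b ∈ E, b ∈ C) :=
  ⟨fun hC => ⟨hC.isStringFilter_s17, fun _ ha _ hE => hC.exists_mem_of_tightCoverStr ha hE⟩,
    fun ⟨hF, htight⟩ => ⟨prefix_or_prefix_of_common_extension hF.2.1,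
      exists_mem_length_of_tight (by omega) hF htight⟩⟩
end
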